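/- arXiv:1911.11400 — 7 statements merged into one kernel-verified Lean document; each statement's English description precedes it below -/
import Mathlib

section
/- If (M →^∂ N, ·, {−,−}) is a braided crossed module of Lie K-algebras, then the map Φ₁ : N ⊗ N → M defined on generators by n ⊗ n' ↦ {n,n'} is a well-defined Lie K-algebra homomorphism, where N ⊗ N is the non-abelian tensor product of N with itself via the adjoint action. -/
universe u

/-- The Lie bracket as a bilinear map. -/
def bracketMap (K : Type u) [CommRing K] (M : Type u) [LieRing M] [LieAlgebra K M] :
    M →ₗ[K] M →ₗ[K] M :=
  LinearMap.mk₂ K (fun a b => ⁅a, b⁆) add_lie smul_lie lie_add lie_smul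

/-- Axioms for a crossed module of Lie `K`-algebras `(d : M → N, act)`. -/
structure LieXMod (K : Type u) [CommRing K] (M N : Type u)
    [LieRing M] [LieAlgebra K M] [LieRing N] [LieAlgebra K N]
    (d : M →ₗ⁅K⁆ N) (act : N →ₗ[K] M →ₗ[K] M) : Prop where
  act_lie : ∀ n n' m, act ⁅n, n'⁆ m = act n (act n' m) - act n' (act n m)
  lie_act : ∀ n m m', act n ⁅m, m'⁆ = ⁅act n m, m'⁆ + ⁅m, act n m'⁆
  equivar : ∀ n m, d (act n m) = ⁅n, d m⁆
  peiffer : ∀ m m', act (d m) m' = ⁅m, m'⁆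

/-- Axioms `BLie1`–`BLie6` for a braiding on a crossed module of Lie algebras. -/
structure LieBraiding (K : Type u) [CommRing K] (M N : Type u)
    [LieRing M] [LieAlgebra K M] [LieRing N] [LieAlgebra K N]
    (d : M →ₗ⁅K⁆ N) (act : N →ₗ[K] M →ₗ[K] M)
    (br : N →ₗ[K] N →ₗ[K] M) : Prop where
  b1 : ∀ n n', d (br n n') = ⁅n, n'⁆
  b2 : ∀ m m', br (d m) (d m') = ⁅m, m'⁆
  b3 : ∀ m n, br (d m) n = - act n m
  b4 : ∀ n m, br n (d m) = act n m
  b5 : ∀ n n' n'', br n ⁅n', n''⁆ = br ⁅n, n'⁆ n'' - br ⁅n, n''⁆ n'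
  b6 : ∀ n n' n'', br ⁅n, n'⁆ n'' = br n ⁅n', n''⁆ - br n' ⁅n, n''⁆

/-- `T`, together with the bilinear pairing `t`, is the non-abelian tensor product
of the Lie algebras `A` and `B` acting on each other via `actAB` and `actBA`:
it satisfies the defining relations of the presentation and the universal property. -/
structure IsNATensor (K : Type u) [CommRing K] (A B : Type u)
    [LieRing A] [LieAlgebra K A] [LieRing B] [LieAlgebra K B]
    (actAB : A →ₗ[K] B →ₗ[K] B) (actBA : B →ₗ[K] A →ₗ[K] A)
    (T : Type u) [LieRing T] [LieAlgebra K T]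
    (t : A →ₗ[K] B →ₗ[K] T) : Prop where
  rel3a : ∀ a a' b, t ⁅a, a'⁆ b = t a (actAB a' b) - t a' (actAB a b)
  rel3b : ∀ a b b', t a ⁅b, b'⁆ = t (actBA b' a) b - t (actBA b a) b'
  rel4 : ∀ a b a' b', ⁅t a b, t a' b'⁆ = - t (actBA b a) (actAB a' b')
  lift : ∀ (C : Type u) [LieRing C] [LieAlgebra K C] (f : A →ₗ[K] B →ₗ[K] C),
      (∀ a a' b, f ⁅a, a'⁆ b = f a (actAB a' b) - f a' (actAB a b)) →
      (∀ a b b', f a ⁅b, b'⁆ = f (actBA b' a) b - f (actBA b a) b') →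
      (∀ a b a' b', ⁅f a b, f a' b'⁆ = - f (actBA b a) (actAB a' b')) →
      ∃! φ : T →ₗ⁅K⁆ C, ∀ a b, φ (t a b) = f a b

/-- `T` with pairing `t` is the non-abelian tensor square of `N` (adjoint actions). -/
def IsNATensorSq (K : Type u) [CommRing K] (N : Type u) [LieRing N] [LieAlgebra K N]
    (T : Type u) [LieRing T] [LieAlgebra K T] (t : N →ₗ[K] N →ₗ[K] T) : Prop :=
  IsNATensor K N N (bracketMap K N) (bracketMap K N) T t


theorem braiding_induces_hom_on_tensor_square (K : Type u) [CommRing K] (M N : Type u) [LieRing M] [LieAlgebra K M]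
    [LieRing N] [LieAlgebra K N] (d : M →ₗ⁅K⁆ N) (act : N →ₗ[K] M →ₗ[K] M)
    (br : N →ₗ[K] N →ₗ[K] M) (hX : LieXMod K M N d act)
    (hB : LieBraiding K M N d act br)
    (T : Type u) [LieRing T] [LieAlgebra K T] (t : N →ₗ[K] N →ₗ[K] T)
    (hT : IsNATensorSq K N T t) :
    ∃ Φ₁ : T →ₗ⁅K⁆ M, ∀ n n' : N, Φ₁ (t n n') = br n n' := by
  obtain ⟨φ, hφ, -⟩ := hT.lift M br
    (fun a a' b => by
      simpa [bracketMap] using hB.b6 a a' b)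
    (fun a b b' => by
      have := hB.b5 a b b'
      simp only [bracketMap, LinearMap.mk₂_apply]
      rw [this, ← lie_skew b' a, ← lie_skew b a]
      simp only [map_neg, LinearMap.neg_apply]
      abel)
    (fun a b a' b' => by
      have h1 : ⁅br a b, br a' b'⁆ = br (d (br a b)) (d (br a' b')) :=
        (hB.b2 _ _).symm
      rw [h1, hB.b1, hB.b1]
      simp only [bracketMap, LinearMap.mk₂_apply]
      rw [show ⁅b, a⁆ = -⁅a, b⁆ from (lie_skew b a).symm, map_neg,
        LinearMap.neg_apply, neg_neg])
  exact ⟨φ, hφ⟩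
end

section
/- For any Lie K-algebra M, the pair (M ⊗ M →^∂ M, ·) with ∂(m ⊗ m') = [m,m'] and action m·(m₁ ⊗ m₂) = m ⊗ [m₁,m₂] is a crossed module of Lie K-algebras, and the map (m, m') ↦ m ⊗ m' is a braiding on it. -/
universe u

/-! The bracket `M × M → M` satisfies the defining relations of `M ⊗ M`, so the universal
property yields `∂ : M ⊗ M → M` with `∂ (m ⊗ m') = [m, m']`. The universal property applied to
the corestriction of `⊗` to the Lie subalgebra spanned by the elements `m ⊗ m'` shows that these
elements span `M ⊗ M` as a module, so linear identities need only be checked on them. There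
relation (4) gives `[x, y] = ∂x ⊗ ∂y`, and the two relations (3) combine into the cyclic identity
`[a, b] ⊗ c + [b, c] ⊗ a + [c, a] ⊗ b = 0`, whence `m ⊗ [a, b] = -[a, b] ⊗ m`. With
`m · x = m ⊗ ∂x`, every crossed-module and braiding axiom is one of these identities. -/

variable {K : Type u} [CommRing K]

namespace IsNATensor

variable {A B : Type u} [LieRing A] [LieAlgebra K A] [LieRing B] [LieAlgebra K B]
  {actAB : A →ₗ[K] B →ₗ[K] B} {actBA : B →ₗ[K] A →ₗ[K] A}
  {T : Type u} [LieRing T] [LieAlgebra K T] {t : A →ₗ[K] B →ₗ[K] T}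

theorem lie_mem_span_tmul (hT : IsNATensor K A B actAB actBA T t) {x y : T}
    (hx : x ∈ Submodule.span K {z | ∃ a b, t a b = z})
    (hy : y ∈ Submodule.span K {z | ∃ a b, t a b = z}) :
    ⁅x, y⁆ ∈ Submodule.span K {z | ∃ a b, t a b = z} := by
  refine LinearMap.BilinMap.apply_apply_mem_of_mem_span _ _ _ (bracketMap K T) ?_ x y hx hy
  rintro _ ⟨a, b, rfl⟩ _ ⟨a', b', rfl⟩
  show ⁅t a b, t a' b'⁆ ∈ _
  rw [hT.rel4]
  exact neg_mem (Submodule.subset_span ⟨_, _, rfl⟩)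

theorem span_tmul_eq_top (hT : IsNATensor K A B actAB actBA T t) :
    Submodule.span K {z | ∃ a b, t a b = z} = ⊤ := by
  let S : LieSubalgebra K T :=
    { Submodule.span K {z | ∃ a b, t a b = z} with lie_mem' := hT.lie_mem_span_tmul }
  have mem (a : A) (b : B) : t a b ∈ S := Submodule.subset_span ⟨a, b, rfl⟩
  let tS : A →ₗ[K] B →ₗ[K] S := LinearMap.mk₂ K (fun a b => ⟨t a b, mem a b⟩)
    (fun _ _ _ => Subtype.ext (t.map_add₂ _ _ _)) (fun _ _ _ => Subtype.ext (t.map_smul₂ _ _ _))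
    (fun _ _ _ => Subtype.ext (map_add _ _ _)) (fun _ _ _ => Subtype.ext (map_smul _ _ _))
  obtain ⟨ψ, hψ, -⟩ := hT.lift S tS (fun a a' b => Subtype.ext (hT.rel3a a a' b))
    (fun a b b' => Subtype.ext (hT.rel3b a b b')) (fun a b a' b' => Subtype.ext (hT.rel4 a b a' b'))
  have hψ_section : S.incl.comp ψ = LieHom.id :=
    (hT.lift T t hT.rel3a hT.rel3b hT.rel4).unique (fun a b => congrArg Subtype.val (hψ a b))
      (fun _ _ => rfl)
  refine eq_top_iff.mpr fun x _ => ?_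
  have hx : ((ψ x : S) : T) = x := LieHom.congr_fun hψ_section x
  exact hx ▸ (ψ x).2

theorem linearMap_ext (hT : IsNATensor K A B actAB actBA T t) {X : Type*} [AddCommGroup X]
    [Module K X] {f g : T →ₗ[K] X} (h : ∀ a b, f (t a b) = g (t a b)) : f = g :=
  LinearMap.ext_on hT.span_tmul_eq_top (by rintro _ ⟨a, b, rfl⟩; exact h a b)

theorem linearMap_ext₂ (hT : IsNATensor K A B actAB actBA T t) {X : Type*} [AddCommGroup X]
    [Module K X] {f g : T →ₗ[K] T →ₗ[K] X}
    (h : ∀ a b a' b', f (t a b) (t a' b') = g (t a b) (t a' b')) : f = g :=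
  hT.linearMap_ext fun a b => hT.linearMap_ext (h a b)

end IsNATensor

namespace IsNATensorSq

variable {M T : Type u} [LieRing M] [LieAlgebra K M] [LieRing T] [LieAlgebra K T]
  {t : M →ₗ[K] M →ₗ[K] T}

theorem isNATensor (hT : IsNATensorSq K M T t) :
    IsNATensor K M M (bracketMap K M) (bracketMap K M) T t :=
  hT

theorem tmul_lie_left (hT : IsNATensorSq K M T t) (a a' b : M) :
    t ⁅a, a'⁆ b = t a ⁅a', b⁆ - t a' ⁅a, b⁆ :=
  hT.isNATensor.rel3a a a' b

theorem tmul_lie_right (hT : IsNATensorSq K M T t) (a b b' : M) :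
    t a ⁅b, b'⁆ = t ⁅b', a⁆ b - t ⁅b, a⁆ b' :=
  hT.isNATensor.rel3b a b b'

theorem lie_tmul_tmul (hT : IsNATensorSq K M T t) (a b a' b' : M) :
    ⁅t a b, t a' b'⁆ = t ⁅a, b⁆ ⁅a', b'⁆ := by
  rw [hT.isNATensor.rel4]
  show -t ⁅b, a⁆ ⁅a', b'⁆ = t ⁅a, b⁆ ⁅a', b'⁆
  rw [← lie_skew a b, map_neg, LinearMap.neg_apply]

theorem tmul_lie_jacobi (hT : IsNATensorSq K M T t) (x y z : M) :
    t ⁅x, y⁆ z + t ⁅y, z⁆ x + t ⁅z, x⁆ y = 0 := by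
  have h₁ := hT.tmul_lie_left x y z
  have h₂ := hT.tmul_lie_right x y z
  have h₃ := hT.tmul_lie_right y x z
  rw [← lie_skew y x] at h₂
  rw [← lie_skew z y] at h₃
  simp only [map_neg, LinearMap.neg_apply] at h₂ h₃
  linear_combination (norm := module) -h₁ - h₂ + h₃

theorem tmul_lie_eq_neg_lie_tmul (hT : IsNATensorSq K M T t) (u v w : M) :
    t u ⁅v, w⁆ = -t ⁅v, w⁆ u := by
  have h := hT.tmul_lie_right u v w
  rw [← lie_skew v u] at h
  simp only [map_neg, LinearMap.neg_apply, sub_neg_eq_add] at h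
  linear_combination (norm := module) h + hT.tmul_lie_jacobi v w u

theorem tmul_lie_eq_lie_tmul_sub (hT : IsNATensorSq K M T t) (n n' n'' : M) :
    t n ⁅n', n''⁆ = t ⁅n, n'⁆ n'' - t ⁅n, n''⁆ n' := by
  rw [hT.tmul_lie_right, ← lie_skew n'' n, ← lie_skew n' n]
  simp only [map_neg, LinearMap.neg_apply]
  abel

theorem exists_lieHom_tmul_eq_lie (hT : IsNATensorSq K M T t) :
    ∃ d : T →ₗ⁅K⁆ M, ∀ a b, d (t a b) = ⁅a, b⁆ := by
  obtain ⟨d, hd, -⟩ := hT.isNATensor.lift M (bracketMap K M) (fun a a' b => lie_lie a a' b)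
    (fun a b b' => by
      show ⁅a, ⁅b, b'⁆⁆ = ⁅⁅b', a⁆, b⁆ - ⁅⁅b, a⁆, b'⁆
      rw [leibniz_lie, ← lie_skew b ⁅a, b'⁆, ← lie_skew a b', ← lie_skew a b]
      simp only [neg_lie, neg_neg]
      abel)
    (fun a b a' b' => by
      show ⁅⁅a, b⁆, ⁅a', b'⁆⁆ = -⁅⁅b, a⁆, ⁅a', b'⁆⁆
      rw [← lie_skew b a, neg_lie, neg_neg])
  exact ⟨d, hd⟩

variable {d : T →ₗ⁅K⁆ M}

theorem lie_eq_tmul (hT : IsNATensorSq K M T t) (hd : ∀ a b, d (t a b) = ⁅a, b⁆) (x y : T) :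
    ⁅x, y⁆ = t (d x) (d y) := by
  have h : bracketMap K T = t.compl₁₂ (d : T →ₗ[K] M) d :=
    hT.isNATensor.linearMap_ext₂ fun a b a' b' => by simp [bracketMap, hd, hT.lie_tmul_tmul]
  exact LinearMap.congr_fun₂ h x y

theorem tmul_apply_lieHom_left (hT : IsNATensorSq K M T t) (hd : ∀ a b, d (t a b) = ⁅a, b⁆)
    (x : T) (n : M) : t (d x) n = -t n (d x) := by
  have h : t.flip n ∘ₗ (d : T →ₗ[K] M) = -(t n ∘ₗ d) :=
    hT.isNATensor.linearMap_ext fun a b => by simp [hd, hT.tmul_lie_eq_neg_lie_tmul n a b]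
  exact LinearMap.congr_fun h x

theorem lieXMod (hT : IsNATensorSq K M T t) (hd : ∀ a b, d (t a b) = ⁅a, b⁆) :
    LieXMod K T M d (t.compl₂ (d : T →ₗ[K] M)) where
  act_lie n n' x := by simpa [hd] using hT.tmul_lie_left n n' (d x)
  lie_act n x y := by
    show t n (d ⁅x, y⁆) = ⁅t n (d x), y⁆ + ⁅x, t n (d y)⁆
    rw [LieHom.map_lie, hT.lie_eq_tmul hd, hT.lie_eq_tmul hd x, hd, hd,
      hT.tmul_lie_eq_lie_tmul_sub n, hT.tmul_lie_eq_neg_lie_tmul (d x) n, sub_eq_add_neg]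
  equivar n x := by simp [hd]
  peiffer x y := (hT.lie_eq_tmul hd x y).symm

theorem lieBraiding (hT : IsNATensorSq K M T t) (hd : ∀ a b, d (t a b) = ⁅a, b⁆) :
    LieBraiding K T M d (t.compl₂ (d : T →ₗ[K] M)) t where
  b1 := hd
  b2 x y := (hT.lie_eq_tmul hd x y).symm
  b3 := hT.tmul_apply_lieHom_left hd
  b4 _ _ := rfl
  b5 := hT.tmul_lie_eq_lie_tmul_sub
  b6 := hT.tmul_lie_left

end IsNATensorSq

theorem tensor_square_braided_crossed_module (K : Type u) [CommRing K]
    (M : Type u) [LieRing M] [LieAlgebra K M]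
    (T : Type u) [LieRing T] [LieAlgebra K T] (t : M →ₗ[K] M →ₗ[K] T)
    (hT : IsNATensorSq K M T t) :
    ∃ (dT : T →ₗ⁅K⁆ M) (actT : M →ₗ[K] T →ₗ[K] T),
      (∀ a b : M, dT (t a b) = ⁅a, b⁆) ∧
      (∀ m a b : M, actT m (t a b) = t m ⁅a, b⁆) ∧
      LieXMod K T M dT actT ∧ LieBraiding K T M dT actT t := by
  obtain ⟨d, hd⟩ := hT.exists_lieHom_tmul_eq_lie
  exact ⟨d, t.compl₂ (d : T →ₗ[K] M), hd, fun m a b => by simp [hd], hT.lieXMod hd,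
    hT.lieBraiding hd⟩
end

section
/- If (M →^∂ N, ·, {−,−}) is a braided crossed module of Lie K-algebras, then the pair (Φ₁, Φ₂), with Φ₁(n ⊗ n') = {n,n'} and Φ₂(n ⊗ n') = [n,n'], is a morphism of braided crossed modules from (N ⊗ N →^Id N ⊗ N, [−,−], [−,−]) to (M →^∂ N, ·, {−,−}), and moreover ker(Φ₁) ⊆ (N ⊗ N)^(N⊗N) and ker(Φ₂) ⊆ Z_B(N ⊗ N). -/
universe u

/-
The key fact is that the bracket of the non-abelian tensor square factors through the
commutator map `κ = Φ₂`: `⁅x, y⁆ = κ x ⊗ κ y`. The defining relations give it when one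
argument is a generator `a ⊗ b`, and it spreads to all of `T` because the universal property
forces `T` to be Lie-generated by the `a ⊗ b`. Then `Φ₁ ⁅x, y⁆ = {Φ₂ x, Φ₂ y}` and anything
killed by `Φ₂` is central; `d ∘ Φ₁ = Φ₂` holds by uniqueness of lifts and `BLie1`, so `ker Φ₁`
lies in `ker Φ₂`, and `BLie4` turns the braiding condition into the action condition.
-/

@[simp] theorem bracketMap_apply {K : Type u} [CommRing K] {M : Type u} [LieRing M]
    [LieAlgebra K M] (a b : M) : bracketMap K M a b = ⁅a, b⁆ := rfl

namespace IsNATensor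

variable {K : Type u} [CommRing K] {A B T : Type u} [LieRing A] [LieAlgebra K A]
  [LieRing B] [LieAlgebra K B] [LieRing T] [LieAlgebra K T]
  {actAB : A →ₗ[K] B →ₗ[K] B} {actBA : B →ₗ[K] A →ₗ[K] A} {t : A →ₗ[K] B →ₗ[K] T}

theorem lieHom_ext (hT : IsNATensor K A B actAB actBA T t) {C : Type u} [LieRing C]
    [LieAlgebra K C] {φ ψ : T →ₗ⁅K⁆ C} (h : ∀ a b, φ (t a b) = ψ (t a b)) : φ = ψ := by
  obtain ⟨χ, -, huniq⟩ := hT.lift C (t.compr₂ ψ.toLinearMap)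
    (fun a a' b => by simp [hT.rel3a a a' b])
    (fun a b b' => by simp [hT.rel3b a b b'])
    (fun a b a' b' => by simp [← LieHom.map_lie, hT.rel4 a b a' b'])
  exact (huniq φ (by simpa using h)).trans (huniq ψ (by simp)).symm

theorem lieSpan_eq_top (hT : IsNATensor K A B actAB actBA T t) :
    LieSubalgebra.lieSpan K T {x | ∃ a b, t a b = x} = ⊤ := by
  set S := LieSubalgebra.lieSpan K T {x | ∃ a b, t a b = x}
  have ht_mem (a b) : t a b ∈ S := LieSubalgebra.subset_lieSpan ⟨a, b, rfl⟩
  obtain ⟨ψ, hψ, -⟩ := hT.lift S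
    (LinearMap.mk₂ K (fun a b => ⟨t a b, ht_mem a b⟩)
      (fun a a' b => Subtype.ext (by simp))
      (fun c a b => Subtype.ext (by simp))
      (fun a b b' => Subtype.ext (by simp))
      (fun c a b => Subtype.ext (by simp)))
    (fun a a' b => Subtype.ext (by simpa using hT.rel3a a a' b))
    (fun a b b' => Subtype.ext (by simpa using hT.rel3b a b b'))
    (fun a b a' b' => Subtype.ext (by simpa using hT.rel4 a b a' b'))
  have hsection : S.incl.comp ψ = LieHom.id := hT.lieHom_ext fun a b => by simp [hψ]
  refine eq_top_iff.mpr fun x _ => ?_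
  have hx : (ψ x : T) = x := LieHom.congr_fun hsection x
  exact hx ▸ (ψ x).2

theorem mem_lieSpan (hT : IsNATensor K A B actAB actBA T t) (x : T) :
    x ∈ LieSubalgebra.lieSpan K T {x | ∃ a b, t a b = x} :=
  hT.lieSpan_eq_top ▸ LieSubalgebra.mem_top x

end IsNATensor

namespace IsNATensorSq

variable {K : Type u} [CommRing K] {N T : Type u} [LieRing N] [LieAlgebra K N]
  [LieRing T] [LieAlgebra K T] {t : N →ₗ[K] N →ₗ[K] T}

theorem lie_pairing_right (hT : IsNATensorSq K N T t) {κ : T →ₗ⁅K⁆ N}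
    (hκ : ∀ a b, κ (t a b) = ⁅a, b⁆) (x : T) (a b : N) : ⁅x, t a b⁆ = t (κ x) ⁅a, b⁆ := by
  induction IsNATensor.mem_lieSpan hT x using LieSubalgebra.lieSpan_induction
    generalizing a b with
  | mem x hx =>
    obtain ⟨c, e, rfl⟩ := hx
    rw [hT.rel4, hκ, bracketMap_apply, bracketMap_apply, ← LinearMap.neg_apply, ← map_neg,
      lie_skew]
  | zero => simp
  | add x y _ _ hx hy => simp [hx, hy]
  | smul c x _ hx => simp [hx]
  | lie x y _ _ hx hy =>
    have h := hT.rel3a (κ x) (κ y) ⁅a, b⁆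
    simp only [bracketMap_apply] at h
    rw [lie_lie, hy, hx, hx, hy, LieHom.map_lie, h]

theorem lie_eq_pairing (hT : IsNATensorSq K N T t) {κ : T →ₗ⁅K⁆ N}
    (hκ : ∀ a b, κ (t a b) = ⁅a, b⁆) (x y : T) : ⁅x, y⁆ = t (κ x) (κ y) := by
  induction IsNATensor.mem_lieSpan hT y using LieSubalgebra.lieSpan_induction
    generalizing x with
  | mem y hy =>
    obtain ⟨a, b, rfl⟩ := hy
    rw [hT.lie_pairing_right hκ, hκ]
  | zero => simp
  | add y z _ _ hy hz => simp [hy, hz]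
  | smul c y _ hy => simp [hy]
  | lie y z _ _ hy hz =>
    have h := hT.rel3b (κ x) (κ y) (κ z)
    simp only [bracketMap_apply] at h
    rw [leibniz_lie, hz ⁅x, y⁆, ← lie_skew y ⁅x, z⁆, hy ⁅x, z⁆, LieHom.map_lie,
      LieHom.map_lie, LieHom.map_lie, h, ← lie_skew (κ z), ← lie_skew (κ y)]
    simp only [map_neg, LinearMap.neg_apply]
    abel

end IsNATensorSq

theorem Phi_is_morphism_and_kernels_central_general (K : Type u) [CommRing K] (M N : Type u) [LieRing M] [LieAlgebra K M]
    [LieRing N] [LieAlgebra K N] (d : M →ₗ⁅K⁆ N) (act : N →ₗ[K] M →ₗ[K] M)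
    (br : N →ₗ[K] N →ₗ[K] M)
    (hB : LieBraiding K M N d act br)
    (T : Type u) [LieRing T] [LieAlgebra K T] (t : N →ₗ[K] N →ₗ[K] T)
    (hT : IsNATensorSq K N T t) (Φ₁ : T →ₗ⁅K⁆ M) (Φ₂ : T →ₗ⁅K⁆ N)
    (hΦ₁ : ∀ n n' : N, Φ₁ (t n n') = br n n')
    (hΦ₂ : ∀ n n' : N, Φ₂ (t n n') = ⁅n, n'⁆) :
    (∀ x y : T, Φ₁ ⁅x, y⁆ = act (Φ₂ x) (Φ₁ y)) ∧
      (∀ x : T, d (Φ₁ x) = Φ₂ x) ∧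
      (∀ x y : T, Φ₁ ⁅x, y⁆ = br (Φ₂ x) (Φ₂ y)) ∧
      (∀ x : T, Φ₁ x = 0 → ∀ y : T, ⁅y, x⁆ = 0) ∧
      (∀ x : T, Φ₂ x = 0 → ∀ y : T, ⁅x, y⁆ = 0 ∧ ⁅y, x⁆ = 0) := by
  have hd (x : T) : d (Φ₁ x) = Φ₂ x := by
    have hcomp : d.comp Φ₁ = Φ₂ :=
      IsNATensor.lieHom_ext hT fun a b => by simp [hΦ₁, hΦ₂, hB.b1]
    exact LieHom.congr_fun hcomp x
  have hbr (x y : T) : Φ₁ ⁅x, y⁆ = br (Φ₂ x) (Φ₂ y) := by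
    rw [hT.lie_eq_pairing hΦ₂, hΦ₁]
  have hcentral (x : T) (hx : Φ₂ x = 0) (y : T) : ⁅x, y⁆ = 0 ∧ ⁅y, x⁆ = 0 := by
    simp [hT.lie_eq_pairing hΦ₂ x, hT.lie_eq_pairing hΦ₂ y, hx]
  refine ⟨fun x y => by rw [hbr, ← hd y, hB.b4], hd, hbr, fun x hx y => ?_, hcentral⟩
  exact (hcentral x (by rw [← hd, hx, map_zero]) y).2

theorem Phi_is_morphism_and_kernels_central (K : Type u) [CommRing K] (M N : Type u) [LieRing M] [LieAlgebra K M]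
    [LieRing N] [LieAlgebra K N] (d : M →ₗ⁅K⁆ N) (act : N →ₗ[K] M →ₗ[K] M)
    (br : N →ₗ[K] N →ₗ[K] M) (hX : LieXMod K M N d act)
    (hB : LieBraiding K M N d act br)
    (T : Type u) [LieRing T] [LieAlgebra K T] (t : N →ₗ[K] N →ₗ[K] T)
    (hT : IsNATensorSq K N T t) (Φ₁ : T →ₗ⁅K⁆ M) (Φ₂ : T →ₗ⁅K⁆ N)
    (hΦ₁ : ∀ n n' : N, Φ₁ (t n n') = br n n')
    (hΦ₂ : ∀ n n' : N, Φ₂ (t n n') = ⁅n, n'⁆) :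
    (∀ x y : T, Φ₁ ⁅x, y⁆ = act (Φ₂ x) (Φ₁ y)) ∧
      (∀ x : T, d (Φ₁ x) = Φ₂ x) ∧
      (∀ x y : T, Φ₁ ⁅x, y⁆ = br (Φ₂ x) (Φ₂ y)) ∧
      (∀ x : T, Φ₁ x = 0 → ∀ y : T, ⁅y, x⁆ = 0) ∧
      (∀ x : T, Φ₂ x = 0 → ∀ y : T, ⁅x, y⁆ = 0 ∧ ⁅y, x⁆ = 0) :=
  Phi_is_morphism_and_kernels_central_general K M N d act br hB T t hT Φ₁ Φ₂ hΦ₁ hΦ₂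
end

section
/- Let (X₁ →^δ X₂, *, ⦅−,−⦆) → (M →^∂ N, ·, {−,−}) be a central extension of braided crossed modules of Lie K-algebras via f = (f₁, f₂). Then the maps h₁ : N ⊗ N → X₁, n ⊗ η ↦ ⦅n̄, η̄⦆, and h₂ : N ⊗ N → X₂, n ⊗ η ↦ [n̄, η̄], where n̄, η̄ are arbitrary preimages of n, η under f₂, are well-defined (independent of the chosen preimages), form a morphism of braided crossed modules, and satisfy f ∘ h = Φ. -/
universe u

theorem lift_through_central_extension (K : Type u) [CommRing K] (M N : Type u) [LieRing M] [LieAlgebra K M]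
    [LieRing N] [LieAlgebra K N] (d : M →ₗ⁅K⁆ N) (act : N →ₗ[K] M →ₗ[K] M)
    (br : N →ₗ[K] N →ₗ[K] M) (hX : LieXMod K M N d act)
    (hB : LieBraiding K M N d act br)
    (T : Type u) [LieRing T] [LieAlgebra K T] (t : N →ₗ[K] N →ₗ[K] T)
    (hT : IsNATensorSq K N T t)
    (X₁ X₂ : Type u) [LieRing X₁] [LieAlgebra K X₁] [LieRing X₂] [LieAlgebra K X₂]
    (δX : X₁ →ₗ⁅K⁆ X₂) (actX : X₂ →ₗ[K] X₁ →ₗ[K] X₁) (brX : X₂ →ₗ[K] X₂ →ₗ[K] X₁)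
    (hXX : LieXMod K X₁ X₂ δX actX) (hXB : LieBraiding K X₁ X₂ δX actX brX)
    (f₁ : X₁ →ₗ⁅K⁆ M) (f₂ : X₂ →ₗ⁅K⁆ N)
    (hf_act : ∀ (x : X₂) (ξ : X₁), f₁ (actX x ξ) = act (f₂ x) (f₁ ξ))
    (hf_d : ∀ ξ : X₁, d (f₁ ξ) = f₂ (δX ξ))
    (hf_br : ∀ x y : X₂, f₁ (brX x y) = br (f₂ x) (f₂ y))
    (hf_surj₁ : Function.Surjective f₁) (hf_surj₂ : Function.Surjective f₂)
    (hf_c₁ : ∀ ξ : X₁, f₁ ξ = 0 → ∀ x : X₂, actX x ξ = 0)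
    (hf_c₂ : ∀ x : X₂, f₂ x = 0 → ∀ y : X₂, brX x y = 0 ∧ brX y x = 0) :
    ∃ (h₁ : T →ₗ⁅K⁆ X₁) (h₂ : T →ₗ⁅K⁆ X₂),
      (∀ (n η : N) (n' η' : X₂), f₂ n' = n → f₂ η' = η →
        h₁ (t n η) = brX n' η' ∧ h₂ (t n η) = ⁅n', η'⁆) ∧
      (∀ x y : T, h₁ ⁅x, y⁆ = actX (h₂ x) (h₁ y)) ∧
      (∀ x : T, δX (h₁ x) = h₂ x) ∧
      (∀ x y : T, h₁ ⁅x, y⁆ = brX (h₂ x) (h₂ y)) ∧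
      (∀ n η : N, f₁ (h₁ (t n η)) = br n η) ∧
      (∀ n η : N, f₂ (h₂ (t n η)) = ⁅n, η⁆) := by
  classical
  set s : N → X₂ := fun n => (hf_surj₂ n).choose with hs_def
  have hs : ∀ n, f₂ (s n) = n := fun n => (hf_surj₂ n).choose_spec
  -- well-definedness of brX modulo ker f₂
  have wd : ∀ x x' y y' : X₂, f₂ x = f₂ x' → f₂ y = f₂ y' → brX x y = brX x' y' := by
    intro x x' y y' hx hy
    have h1 : brX (x - x') y = 0 := (hf_c₂ (x - x') (by simp [hx]) y).1
    have h2 : brX x' (y - y') = 0 := (hf_c₂ (y - y') (by simp [hy]) x').2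
    have e1 : brX x y = brX x' y := by
      have := h1; rw [map_sub, LinearMap.sub_apply, sub_eq_zero] at this; exact this
    have e2 : brX x' y = brX x' y' := by
      have := h2; rw [map_sub, sub_eq_zero] at this; exact this
    rw [e1, e2]
  -- the bilinear map F
  set F : N →ₗ[K] N →ₗ[K] X₁ := LinearMap.mk₂ K (fun n η => brX (s n) (s η))
    (fun n n' η => by
      show brX (s (n + n')) (s η) = brX (s n) (s η) + brX (s n') (s η)
      rw [wd (s (n + n')) (s n + s n') (s η) (s η) (by simp [hs]) rfl]
      simp)
    (fun c n η => by
      show brX (s (c • n)) (s η) = c • brX (s n) (s η)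
      rw [wd (s (c • n)) (c • s n) (s η) (s η) (by simp [hs]) rfl]
      simp)
    (fun n η η' => by
      show brX (s n) (s (η + η')) = brX (s n) (s η) + brX (s n) (s η')
      rw [wd (s n) (s n) (s (η + η')) (s η + s η') rfl (by simp [hs])]
      simp)
    (fun c n η => by
      show brX (s n) (s (c • η)) = c • brX (s n) (s η)
      rw [wd (s n) (s n) (s (c • η)) (c • s η) rfl (by simp [hs])]
      simp) with hF_def
  have hF : ∀ n η, F n η = brX (s n) (s η) := fun n η => rfl
  have hFwd : ∀ (n η : N) (x y : X₂), f₂ x = n → f₂ y = η → F n η = brX x y := by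
    intro n η x y hx hy
    rw [hF]
    exact wd _ _ _ _ (by rw [hs, hx]) (by rw [hs, hy])
  have hbm : ∀ a b : N, bracketMap K N a b = ⁅a, b⁆ := fun a b => rfl
  -- relations for F
  have R1 : ∀ a a' b, F ⁅a, a'⁆ b = F a (bracketMap K N a' b) - F a' (bracketMap K N a b) := by
    intro a a' b
    rw [hbm, hbm,
      hFwd ⁅a, a'⁆ b ⁅s a, s a'⁆ (s b) (by rw [LieHom.map_lie, hs, hs]) (hs b),
      hFwd a ⁅a', b⁆ (s a) ⁅s a', s b⁆ (hs a) (by rw [LieHom.map_lie, hs, hs]),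
      hFwd a' ⁅a, b⁆ (s a') ⁅s a, s b⁆ (hs a') (by rw [LieHom.map_lie, hs, hs])]
    exact hXB.b6 _ _ _
  have R2 : ∀ a b b', F a ⁅b, b'⁆ = F (bracketMap K N b' a) b - F (bracketMap K N b a) b' := by
    intro a b b'
    rw [hbm, hbm,
      hFwd a ⁅b, b'⁆ (s a) ⁅s b, s b'⁆ (hs a) (by rw [LieHom.map_lie, hs, hs]),
      hFwd ⁅b', a⁆ b ⁅s b', s a⁆ (s b) (by rw [LieHom.map_lie, hs, hs]) (hs b),
      hFwd ⁅b, a⁆ b' ⁅s b, s a⁆ (s b') (by rw [LieHom.map_lie, hs, hs]) (hs b')]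
    have h5 := hXB.b5 (s a) (s b) (s b')
    have e1 : (⁅s b', s a⁆ : X₂) = -⁅s a, s b'⁆ := by rw [← lie_skew]
    have e2 : (⁅s b, s a⁆ : X₂) = -⁅s a, s b⁆ := by rw [← lie_skew]
    rw [h5, e1, e2]
    simp only [map_neg, LinearMap.neg_apply]
    abel
  have key : ∀ (x y : X₂) (m : X₁), ⁅brX x y, m⁆ = actX ⁅x, y⁆ m := by
    intro x y m
    rw [← hXB.b1, hXX.peiffer]
  have R3 : ∀ a b a' b', ⁅F a b, F a' b'⁆ =
      - F (bracketMap K N b a) (bracketMap K N a' b') := by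
    intro a b a' b'
    rw [hbm, hbm, hF a b, hF a' b',
      hFwd ⁅b, a⁆ ⁅a', b'⁆ ⁅s b, s a⁆ ⁅s a', s b'⁆
        (by rw [LieHom.map_lie, hs, hs]) (by rw [LieHom.map_lie, hs, hs])]
    have e1 : brX ⁅s b, s a⁆ ⁅s a', s b'⁆
        = - actX ⁅s a', s b'⁆ (brX (s b) (s a)) := by
      rw [← hXB.b1 (s b) (s a), hXB.b3]
    have e2 : actX ⁅s a', s b'⁆ (brX (s b) (s a))
        = ⁅brX (s a') (s b'), brX (s b) (s a)⁆ := by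
      rw [← hXB.b1 (s a') (s b'), hXX.peiffer]
    rw [e1, e2, neg_neg, ← lie_skew (brX (s a') (s b')), key (s a) (s b),
      key (s b) (s a),
      show (⁅s b, s a⁆ : X₂) = -⁅s a, s b⁆ from (lie_skew _ _).symm,
      map_neg, LinearMap.neg_apply, neg_neg]
  obtain ⟨h₁, hh₁, -⟩ := hT.lift X₁ F R1 R2 R3
  refine ⟨h₁, δX.comp h₁, ?_, ?_, fun x => rfl, ?_, ?_, ?_⟩
  · intro n η n' η' hn hη
    have e : h₁ (t n η) = brX n' η' := by
      rw [hh₁, hFwd n η n' η' hn hη]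
    refine ⟨e, ?_⟩
    show δX (h₁ (t n η)) = _
    rw [e, hXB.b1]
  · intro x y
    rw [LieHom.map_lie, ← hXX.peiffer]
    rfl
  · intro x y
    rw [LieHom.map_lie, ← hXB.b2]
    rfl
  · intro n η
    rw [hh₁, hF, hf_br, hs, hs]
  · intro n η
    show f₂ (δX (h₁ (t n η))) = _
    rw [hh₁, hF, hXB.b1, LieHom.map_lie, hs, hs]
end

section
/- If N is a perfect Lie K-algebra (N = [N,N]), then the braided crossed module (N ⊗ N →^Id N ⊗ N, [−,−], [−,−]) is perfect, i.e., the non-abelian tensor square N ⊗ N satisfies [N ⊗ N, N ⊗ N] = N ⊗ N. -/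
universe u

/-- The submodule span of all brackets, as a Lie subalgebra. -/
def derivedSub (K : Type u) [CommRing K] (M : Type u) [LieRing M] [LieAlgebra K M] :
    LieSubalgebra K M :=
  { Submodule.span K {x : M | ∃ a b : M, x = ⁅a, b⁆} with
    lie_mem' := fun {x y} _ _ => Submodule.subset_span ⟨x, y, rfl⟩ }

lemma lieSpan_brackets_eq (K : Type u) [CommRing K] (M : Type u) [LieRing M]
    [LieAlgebra K M] :
    LieSubalgebra.lieSpan K M {x : M | ∃ a b : M, x = ⁅a, b⁆} = derivedSub K M := by
  apply le_antisymm
  · exact LieSubalgebra.lieSpan_le.mpr Submodule.subset_span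
  · intro x hx
    exact Submodule.span_le.mpr (LieSubalgebra.subset_lieSpan) hx

theorem tensor_square_of_perfect_is_perfect (K : Type u) [CommRing K]
    (N : Type u) [LieRing N] [LieAlgebra K N]
    (T : Type u) [LieRing T] [LieAlgebra K T] (t : N →ₗ[K] N →ₗ[K] T)
    (hT : IsNATensorSq K N T t)
    (hperf : LieSubalgebra.lieSpan K N {x : N | ∃ a b : N, x = ⁅a, b⁆} = ⊤) :
    LieSubalgebra.lieSpan K T {x : T | ∃ a b : T, x = ⁅a, b⁆} = ⊤ := by
  classical
  -- perfection of `N` as a submodule statement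
  have hspanN : Submodule.span K {x : N | ∃ a b : N, x = ⁅a, b⁆} = ⊤ := by
    have := hperf
    rw [lieSpan_brackets_eq] at this
    have : (derivedSub K N).toSubmodule = ⊤ := by rw [this]; rfl
    exact this
  set Sp : Submodule K T := Submodule.span K {x : T | ∃ a b : T, x = ⁅a, b⁆} with hSp
  -- every `t x y` lies in the span of brackets of `T`
  have key : ∀ x y : N, t x y ∈ Sp := by
    intro x y
    have hx : x ∈ Submodule.span K {x : N | ∃ a b : N, x = ⁅a, b⁆} := by
      rw [hspanN]; trivial
    induction hx using Submodule.span_induction generalizing y with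
    | mem x hxmem =>
      obtain ⟨a, b, rfl⟩ := hxmem
      have hy : y ∈ Submodule.span K {x : N | ∃ a b : N, x = ⁅a, b⁆} := by
        rw [hspanN]; trivial
      induction hy using Submodule.span_induction with
      | mem y hymem =>
        obtain ⟨c, d, rfl⟩ := hymem
        have h4 := hT.rel4 a b c d
        have hbr : t ⁅a, b⁆ ⁅c, d⁆ = ⁅t a b, t c d⁆ := by
          rw [h4]
          simp only [bracketMap, LinearMap.mk₂_apply]
          rw [← lie_skew a b, map_neg, LinearMap.neg_apply]
        rw [hbr]
        exact Submodule.subset_span ⟨_, _, rfl⟩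
      | zero => simp
      | add y z hy hz hy' hz' => simp only [map_add]; exact Sp.add_mem hy' hz'
      | smul c y hy hy' => simp only [map_smul]; exact Sp.smul_mem c hy'
    | zero => simp
    | add x z hx hz hx' hz' => simp only [map_add, LinearMap.add_apply]
                               exact Sp.add_mem (hx' y) (hz' y)
    | smul c x hx hx' => simp only [map_smul, LinearMap.smul_apply]
                         exact Sp.smul_mem c (hx' y)
  -- the span of brackets of `T` as a Lie subalgebra
  set S : LieSubalgebra K T := derivedSub K T with hS
  have keyS : ∀ x y : N, t x y ∈ S := key
  -- restrict `t` to a bilinear map into `S`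
  let f : N →ₗ[K] N →ₗ[K] S :=
    LinearMap.mk₂ K (fun a b => ⟨t a b, keyS a b⟩)
      (fun a a' b => by ext; simp)
      (fun c a b => by ext; show t (c • a) b = c • t a b; simp)
      (fun a b b' => by ext; simp)
      (fun c a b => by ext; show t a (c • b) = c • t a b; simp)
  have hf : ∀ a b, (f a b : T) = t a b := fun a b => rfl
  obtain ⟨φ, hφ, -⟩ := hT.lift S f
    (fun a a' b => by ext; simp only [AddSubgroupClass.coe_sub, hf]; exact hT.rel3a a a' b)
    (fun a b b' => by ext; simp only [AddSubgroupClass.coe_sub, hf]; exact hT.rel3b a b b')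
    (fun a b a' b' => by
      ext
      show ((⁅f a b, f a' b'⁆ : S) : T) = _
      rw [LieSubalgebra.coe_bracket]
      simp only [hf, NegMemClass.coe_neg]
      exact hT.rel4 a b a' b')
  obtain ⟨ψ, hψ, huniq⟩ := hT.lift T t hT.rel3a hT.rel3b hT.rel4
  have h1 : (S.incl.comp φ) = LieHom.id := by
    have e1 := huniq (S.incl.comp φ) (fun a b => by
      simp only [LieHom.comp_apply, hφ]; rfl)
    have e2 := huniq LieHom.id (fun a b => rfl)
    rw [e1, e2]
  have hmem : ∀ x : T, x ∈ S := by
    intro x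
    have : S.incl (φ x) = x := by rw [← LieHom.comp_apply, h1]; rfl
    rw [← this]
    exact (φ x).2
  rw [lieSpan_brackets_eq]
  exact (eq_top_iff).mpr (fun x _ => hmem x)
end

section
/- Let Ψ : (Y₁ →^ϱ Y₂, ⋆, ⟦−,−⟧) → (M →^∂ N, ·, {−,−}) be a morphism of braided crossed modules of Lie K-algebras with (Y₁ →^ϱ Y₂) perfect as a braided crossed module. If f : (X₁ →^ρ X₂, *, ⦅−,−⦆) → (M →^∂ N, ·, {−,−}) is a central extension and h is a morphism with Ψ = f ∘ h, then h is the unique morphism satisfying this equality. -/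
/-!
Two lifts `g` and `h` of `Ψ` through `f` differ by elements of `ker f`. On the second level
`ker f₂` is central in `X₂` (a vanishing braiding `⦅c, -⦆` forces `⁅c, -⁆ = ρ⦅c, -⦆ = 0`), so
`g₂` and `h₂` agree on brackets, hence everywhere since `Y₂` is perfect. Once `g₂ = h₂`, the
first components agree on braidings `⟦y, y'⟧`, which generate `Y₁`.
-/

universe u

namespace LieHom

variable {K L L' : Type*} [CommRing K] [LieRing L] [LieAlgebra K L] [LieRing L']
  [LieAlgebra K L']

theorem eqOn_lieSpan {f g : L →ₗ⁅K⁆ L'} {s : Set L} (h : Set.EqOn f g s) :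
    Set.EqOn f g (LieSubalgebra.lieSpan K L s) := by
  intro _ hx
  induction hx using LieSubalgebra.lieSpan_induction with
  | mem x hx => exact h hx
  | zero => simp
  | add x y _ _ hx hy => simp [hx, hy]
  | smul t x _ hx => simp [hx]
  | lie x y _ _ hx hy => simp [hx, hy]

theorem ext_of_lieSpan_eq_top {f g : L →ₗ⁅K⁆ L'} {s : Set L}
    (hs : LieSubalgebra.lieSpan K L s = ⊤) (h : Set.EqOn f g s) : f = g :=
  LieHom.ext fun x => eqOn_lieSpan h (hs ▸ LieSubalgebra.mem_top x)

theorem map_lie_eq_of_forall_sub_lie_eq_zero {f g : L →ₗ⁅K⁆ L'}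
    (hcentral : ∀ a (b : L'), ⁅f a - g a, b⁆ = 0) (a b : L) : f ⁅a, b⁆ = g ⁅a, b⁆ :=
  calc f ⁅a, b⁆ = ⁅g a, f b⁆ := by
        rw [LieHom.map_lie, ← sub_eq_zero, ← sub_lie, hcentral]
    _ = -⁅f b, g a⁆ := (lie_skew _ _).symm
    _ = -⁅g b, g a⁆ := by
        rw [sub_eq_zero.mp ((sub_lie _ _ _).symm.trans (hcentral b (g a)))]
    _ = g ⁅a, b⁆ := by rw [lie_skew, LieHom.map_lie]

theorem ext_of_perfect_of_forall_sub_lie_eq_zero {f g : L →ₗ⁅K⁆ L'}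
    (hperf : LieSubalgebra.lieSpan K L {x : L | ∃ a b : L, x = ⁅a, b⁆} = ⊤)
    (hcentral : ∀ a (b : L'), ⁅f a - g a, b⁆ = 0) : f = g := by
  refine ext_of_lieSpan_eq_top hperf ?_
  rintro _ ⟨a, b, rfl⟩
  exact map_lie_eq_of_forall_sub_lie_eq_zero hcentral a b

end LieHom

theorem LieBraiding.lie_eq_zero_of_forall_braiding_eq_zero {K M N : Type u} [CommRing K]
    [LieRing M] [LieAlgebra K M] [LieRing N] [LieAlgebra K N] {d : M →ₗ⁅K⁆ N}
    {act : N →ₗ[K] M →ₗ[K] M} {br : N →ₗ[K] N →ₗ[K] M} (hB : LieBraiding K M N d act br)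
    {c : N} (hc : ∀ n, br c n = 0) (n : N) : ⁅c, n⁆ = 0 := by
  rw [← hB.b1, hc, map_zero]

theorem uniqueness_of_lift_general (K : Type u) [CommRing K] (N : Type u)
    [LieRing N] [LieAlgebra K N]
    (Y₁ Y₂ : Type u) [LieRing Y₁] [LieAlgebra K Y₁] [LieRing Y₂] [LieAlgebra K Y₂]
    (brY : Y₂ →ₗ[K] Y₂ →ₗ[K] Y₁)
    (hYperf : LieSubalgebra.lieSpan K Y₁ {x : Y₁ | ∃ y y' : Y₂, x = brY y y'} = ⊤ ∧
      LieSubalgebra.lieSpan K Y₂ {x : Y₂ | ∃ a b : Y₂, x = ⁅a, b⁆} = ⊤)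
    (Ψ₂ : Y₂ →ₗ⁅K⁆ N)
    (X₁ X₂ : Type u) [LieRing X₁] [LieAlgebra K X₁] [LieRing X₂] [LieAlgebra K X₂]
    (δX : X₁ →ₗ⁅K⁆ X₂) (actX : X₂ →ₗ[K] X₁ →ₗ[K] X₁) (brX : X₂ →ₗ[K] X₂ →ₗ[K] X₁)
    (hXB : LieBraiding K X₁ X₂ δX actX brX)
    (f₂ : X₂ →ₗ⁅K⁆ N)
    (hf_c₂ : ∀ x : X₂, f₂ x = 0 → ∀ y : X₂, brX x y = 0 ∧ brX y x = 0)
    (h₁ : Y₁ →ₗ⁅K⁆ X₁) (h₂ : Y₂ →ₗ⁅K⁆ X₂)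
    (hh_br : ∀ y y' : Y₂, h₁ (brY y y') = brX (h₂ y) (h₂ y'))
    (hh_comm₂ : ∀ y : Y₂, f₂ (h₂ y) = Ψ₂ y)
    (g₁ : Y₁ →ₗ⁅K⁆ X₁) (g₂ : Y₂ →ₗ⁅K⁆ X₂)
    (hg_br : ∀ y y' : Y₂, g₁ (brY y y') = brX (g₂ y) (g₂ y'))
    (hg_comm₂ : ∀ y : Y₂, f₂ (g₂ y) = Ψ₂ y) :
    g₁ = h₁ ∧ g₂ = h₂ := by
  have hker : ∀ y, f₂ (g₂ y - h₂ y) = 0 := fun y => by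
    rw [map_sub, hg_comm₂, hh_comm₂, sub_self]
  have hg₂ : g₂ = h₂ := LieHom.ext_of_perfect_of_forall_sub_lie_eq_zero hYperf.2 fun y =>
    hXB.lie_eq_zero_of_forall_braiding_eq_zero fun x => (hf_c₂ _ (hker y) x).1
  refine ⟨LieHom.ext_of_lieSpan_eq_top hYperf.1 ?_, hg₂⟩
  rintro _ ⟨y, y', rfl⟩
  rw [hg_br, hh_br, hg₂]

theorem uniqueness_of_lift (K : Type u) [CommRing K] (M N : Type u) [LieRing M] [LieAlgebra K M]
    [LieRing N] [LieAlgebra K N] (d : M →ₗ⁅K⁆ N) (act : N →ₗ[K] M →ₗ[K] M)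
    (br : N →ₗ[K] N →ₗ[K] M) (hX : LieXMod K M N d act)
    (hB : LieBraiding K M N d act br)
    (Y₁ Y₂ : Type u) [LieRing Y₁] [LieAlgebra K Y₁] [LieRing Y₂] [LieAlgebra K Y₂]
    (δY : Y₁ →ₗ⁅K⁆ Y₂) (actY : Y₂ →ₗ[K] Y₁ →ₗ[K] Y₁) (brY : Y₂ →ₗ[K] Y₂ →ₗ[K] Y₁)
    (hYX : LieXMod K Y₁ Y₂ δY actY) (hYB : LieBraiding K Y₁ Y₂ δY actY brY)
    (hYperf : LieSubalgebra.lieSpan K Y₁ {x : Y₁ | ∃ y y' : Y₂, x = brY y y'} = ⊤ ∧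
      LieSubalgebra.lieSpan K Y₂ {x : Y₂ | ∃ a b : Y₂, x = ⁅a, b⁆} = ⊤)
    (Ψ₁ : Y₁ →ₗ⁅K⁆ M) (Ψ₂ : Y₂ →ₗ⁅K⁆ N)
    (hΨ_act : ∀ (y : Y₂) (η : Y₁), Ψ₁ (actY y η) = act (Ψ₂ y) (Ψ₁ η))
    (hΨ_d : ∀ η : Y₁, d (Ψ₁ η) = Ψ₂ (δY η))
    (hΨ_br : ∀ y y' : Y₂, Ψ₁ (brY y y') = br (Ψ₂ y) (Ψ₂ y'))
    (X₁ X₂ : Type u) [LieRing X₁] [LieAlgebra K X₁] [LieRing X₂] [LieAlgebra K X₂]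
    (δX : X₁ →ₗ⁅K⁆ X₂) (actX : X₂ →ₗ[K] X₁ →ₗ[K] X₁) (brX : X₂ →ₗ[K] X₂ →ₗ[K] X₁)
    (hXX : LieXMod K X₁ X₂ δX actX) (hXB : LieBraiding K X₁ X₂ δX actX brX)
    (f₁ : X₁ →ₗ⁅K⁆ M) (f₂ : X₂ →ₗ⁅K⁆ N)
    (hf_act : ∀ (x : X₂) (ξ : X₁), f₁ (actX x ξ) = act (f₂ x) (f₁ ξ))
    (hf_d : ∀ ξ : X₁, d (f₁ ξ) = f₂ (δX ξ))
    (hf_br : ∀ x y : X₂, f₁ (brX x y) = br (f₂ x) (f₂ y))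
    (hf_surj₁ : Function.Surjective f₁) (hf_surj₂ : Function.Surjective f₂)
    (hf_c₁ : ∀ ξ : X₁, f₁ ξ = 0 → ∀ x : X₂, actX x ξ = 0)
    (hf_c₂ : ∀ x : X₂, f₂ x = 0 → ∀ y : X₂, brX x y = 0 ∧ brX y x = 0)
    (h₁ : Y₁ →ₗ⁅K⁆ X₁) (h₂ : Y₂ →ₗ⁅K⁆ X₂)
    (hh_act : ∀ (y : Y₂) (η : Y₁), h₁ (actY y η) = actX (h₂ y) (h₁ η))
    (hh_d : ∀ η : Y₁, δX (h₁ η) = h₂ (δY η))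
    (hh_br : ∀ y y' : Y₂, h₁ (brY y y') = brX (h₂ y) (h₂ y'))
    (hh_comm₁ : ∀ η : Y₁, f₁ (h₁ η) = Ψ₁ η) (hh_comm₂ : ∀ y : Y₂, f₂ (h₂ y) = Ψ₂ y)
    (g₁ : Y₁ →ₗ⁅K⁆ X₁) (g₂ : Y₂ →ₗ⁅K⁆ X₂)
    (hg_act : ∀ (y : Y₂) (η : Y₁), g₁ (actY y η) = actX (g₂ y) (g₁ η))
    (hg_d : ∀ η : Y₁, δX (g₁ η) = g₂ (δY η))
    (hg_br : ∀ y y' : Y₂, g₁ (brY y y') = brX (g₂ y) (g₂ y'))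
    (hg_comm₁ : ∀ η : Y₁, f₁ (g₁ η) = Ψ₁ η) (hg_comm₂ : ∀ y : Y₂, f₂ (g₂ y) = Ψ₂ y) :
    g₁ = h₁ ∧ g₂ = h₂ :=
  uniqueness_of_lift_general K N Y₁ Y₂ brY hYperf Ψ₂ X₁ X₂ δX actX brX hXB f₂ hf_c₂ h₁ h₂ hh_br
    hh_comm₂ g₁ g₂ hg_br hg_comm₂
end

section
/- Let (M →^∂ N, ·, {−,−}) be a braided crossed module of Lie K-algebras with N = [N,N]. Then B_N(M) = D_N(M); consequently, (M →^∂ N, ·, {−,−}) is perfect as a braided crossed module if and only if (M →^∂ N, ·) is perfect as a crossed module. -/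
universe u

theorem braided_commutator_eq_commutator_of_perfect_base (K : Type u) [CommRing K] (M N : Type u) [LieRing M] [LieAlgebra K M]
    [LieRing N] [LieAlgebra K N] (d : M →ₗ⁅K⁆ N) (act : N →ₗ[K] M →ₗ[K] M)
    (br : N →ₗ[K] N →ₗ[K] M) (hX : LieXMod K M N d act)
    (hB : LieBraiding K M N d act br)
    (hN : LieSubalgebra.lieSpan K N {x : N | ∃ a b : N, x = ⁅a, b⁆} = ⊤) :
    LieSubalgebra.lieSpan K M {x : M | ∃ n n' : N, x = br n n'} =
        LieSubalgebra.lieSpan K M {x : M | ∃ (n : N) (m : M), x = act n m} ∧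
      ((LieSubalgebra.lieSpan K M {x : M | ∃ n n' : N, x = br n n'} = ⊤ ∧
      LieSubalgebra.lieSpan K N {x : N | ∃ a b : N, x = ⁅a, b⁆} = ⊤) ↔
        (LieSubalgebra.lieSpan K M {x : M | ∃ (n : N) (m : M), x = act n m} = ⊤ ∧
          LieSubalgebra.lieSpan K N {x : N | ∃ a b : N, x = ⁅a, b⁆} = ⊤)) := by
  set D := LieSubalgebra.lieSpan K M {x : M | ∃ (n : N) (m : M), x = act n m} with hDdef
  have key : LieSubalgebra.lieSpan K M {x : M | ∃ n n' : N, x = br n n'} = D := by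
    apply le_antisymm
    · apply (LieSubalgebra.lieSpan_le).2
      rintro x ⟨n, n', rfl⟩
      let S : LieSubalgebra K N :=
        { carrier := {y : N | ∀ n : N, br n y ∈ D}
          add_mem' := by
            intro a b ha hb n
            rw [map_add]
            exact D.add_mem (ha n) (hb n)
          zero_mem' := by intro n; rw [map_zero]; exact D.zero_mem
          smul_mem' := by
            intro c a ha n
            rw [map_smul]
            exact D.smul_mem c (ha n)
          lie_mem' := by
            intro a b ha hb n
            rw [hB.b5]
            exact D.sub_mem (hb ⁅n, a⁆) (ha ⁅n, b⁆) }
      have hbr : ∀ a b : N, ⁅a, b⁆ ∈ S := by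
        intro a b n
        have : br n ⁅a, b⁆ = act a (br n b) - act b (br n a) := by
          rw [hB.b5, ← hB.b1 n a, ← hB.b1 n b, hB.b3, hB.b3]
          abel
        rw [this]
        exact D.sub_mem (LieSubalgebra.subset_lieSpan ⟨a, br n b, rfl⟩)
          (LieSubalgebra.subset_lieSpan ⟨b, br n a, rfl⟩)
      have hTop : (⊤ : LieSubalgebra K N) ≤ S := by
        rw [← hN]
        apply LieSubalgebra.lieSpan_le.2
        rintro y ⟨a, b, rfl⟩
        exact hbr a b
      exact hTop (LieSubalgebra.mem_top n') n
    · apply (LieSubalgebra.lieSpan_le).2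
      rintro x ⟨n, m, rfl⟩
      rw [← hB.b4 n m]
      exact LieSubalgebra.subset_lieSpan ⟨n, d m, rfl⟩
  exact ⟨key, by rw [key]⟩
end
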